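/- arXiv:2306.12508 — 7 statements merged into one kernel-verified Lean document; each statement's English description precedes it below -/
import Mathlib

section
/- Given two logical zonotopes L1 = ⟨c1, G1⟩ with γ1 generators and L2 = ⟨c2, G2⟩ with γ2 generators in (ZMod 2)^n, the Minkowski XOR L1 ⊕ L2 = { z1 + z2 | z1 ∈ L1, z2 ∈ L2 } is exactly equal to the logical zonotope with center c1 + c2 and generator matrix the concatenation [G1, G2] (i.e., generators g_{1,1},...,g_{1,γ1}, g_{2,1},...,g_{2,γ2}). -/
/-- A logical zonotope with center `c` and generators `g` (indexed by `ι`) over `(ZMod 2)^n`. -/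
def LogicalZonotope {n : ℕ} {ι : Type} [Fintype ι] (c : Fin n → ZMod 2)
    (g : ι → Fin n → ZMod 2) : Set (Fin n → ZMod 2) :=
  {x | ∃ β : ι → ZMod 2, x = c + ∑ i, β i • g i}

/-!
A logical zonotope is the translate `{c} + range (Fintype.linearCombination g)`. The range of the
linear-combination map of concatenated generators is the sum of the two ranges, so the claim
reduces to rearranging a sum of four sets in the commutative monoid of sets under pointwise `+`.
-/

open Pointwise

section LinearCombination

variable {R M ι κ : Type*} [Semiring R] [AddCommMonoid M] [Module R M] [Fintype ι] [Fintype κ]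

theorem Fintype.linearCombination_sumElim_apply (g₁ : ι → M) (g₂ : κ → M) (β : ι ⊕ κ → R) :
    Fintype.linearCombination R (Sum.elim g₁ g₂) β =
      Fintype.linearCombination R g₁ (β ∘ Sum.inl) +
        Fintype.linearCombination R g₂ (β ∘ Sum.inr) := by
  simp only [Fintype.linearCombination_apply, Fintype.sum_sum_type, Sum.elim_inl, Sum.elim_inr,
    Function.comp_apply]

theorem Fintype.range_linearCombination_sumElim (g₁ : ι → M) (g₂ : κ → M) :
    Set.range (Fintype.linearCombination R (Sum.elim g₁ g₂)) =
      Set.range (Fintype.linearCombination R g₁) + Set.range (Fintype.linearCombination R g₂) := by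
  ext x
  constructor
  · rintro ⟨β, rfl⟩
    exact ⟨_, ⟨β ∘ Sum.inl, rfl⟩, _, ⟨β ∘ Sum.inr, rfl⟩,
      (Fintype.linearCombination_sumElim_apply g₁ g₂ β).symm⟩
  · rintro ⟨_, ⟨β₁, rfl⟩, _, ⟨β₂, rfl⟩, rfl⟩
    exact ⟨Sum.elim β₁ β₂, Fintype.linearCombination_sumElim_apply g₁ g₂ _⟩

end LinearCombination

theorem logicalZonotope_eq_singleton_add_range {n : ℕ} {ι : Type} [Fintype ι]
    (c : Fin n → ZMod 2) (g : ι → Fin n → ZMod 2) :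
    LogicalZonotope c g = {c} + Set.range (Fintype.linearCombination (ZMod 2) g) := by
  ext x
  constructor
  · rintro ⟨β, rfl⟩
    exact Set.add_mem_add (Set.mem_singleton c) ⟨β, rfl⟩
  · rintro ⟨_, rfl, _, ⟨β, rfl⟩, rfl⟩
    exact ⟨β, rfl⟩

/-- Minkowski XOR of two logical zonotopes equals the logical zonotope with center
`c1 + c2` and concatenated generators. -/
theorem minkowski_xor_eq {n γ1 γ2 : ℕ} (c1 c2 : Fin n → ZMod 2)
    (g1 : Fin γ1 → Fin n → ZMod 2) (g2 : Fin γ2 → Fin n → ZMod 2) :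
    {z | ∃ z1 ∈ LogicalZonotope c1 g1, ∃ z2 ∈ LogicalZonotope c2 g2, z = z1 + z2}
      = LogicalZonotope (c1 + c2) (Sum.elim g1 g2) := by
  have minkowski_eq_add :
      {z | ∃ z1 ∈ LogicalZonotope c1 g1, ∃ z2 ∈ LogicalZonotope c2 g2, z = z1 + z2} =
        LogicalZonotope c1 g1 + LogicalZonotope c2 g2 := by
    ext z
    simp only [Set.mem_ofPred_eq, Set.mem_add, eq_comm]
  rw [minkowski_eq_add, logicalZonotope_eq_singleton_add_range,
    logicalZonotope_eq_singleton_add_range, logicalZonotope_eq_singleton_add_range,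
    Fintype.range_linearCombination_sumElim, add_add_add_comm, Set.singleton_add_singleton]
end

section
/- Given two logical zonotopes L1 = ⟨c1, G1⟩ and L2 = ⟨c2, G2⟩ in (ZMod 2)^n, the Minkowski XNOR, defined as { ¬(z1 + z2) | z1 ∈ L1, z2 ∈ L2 } (where ¬v = v + 1_n), is exactly the logical zonotope with center c1 + c2 + 1_n and generator list the concatenation of the generators of L1 and L2. -/
open scoped Pointwise

section

variable {n : ℕ} {ι κ : Type} [Fintype ι] [Fintype κ]

theorem add_sum_smul_sumElim (c1 c2 : Fin n → ZMod 2) (g1 : ι → Fin n → ZMod 2)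
    (g2 : κ → Fin n → ZMod 2) (β : ι ⊕ κ → ZMod 2) :
    c1 + c2 + ∑ i, β i • Sum.elim g1 g2 i =
      (c1 + ∑ i, β (Sum.inl i) • g1 i) + (c2 + ∑ i, β (Sum.inr i) • g2 i) := by
  rw [Fintype.sum_sum_type]
  simp only [Sum.elim_inl, Sum.elim_inr]
  abel

theorem logicalZonotope_add_logicalZonotope (c1 c2 : Fin n → ZMod 2)
    (g1 : ι → Fin n → ZMod 2) (g2 : κ → Fin n → ZMod 2) :
    LogicalZonotope c1 g1 + LogicalZonotope c2 g2 =
      LogicalZonotope (c1 + c2) (Sum.elim g1 g2) := by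
  ext x
  constructor
  · rintro ⟨_, ⟨β1, rfl⟩, _, ⟨β2, rfl⟩, rfl⟩
    exact ⟨Sum.elim β1 β2, by rw [add_sum_smul_sumElim]; rfl⟩
  · rintro ⟨β, rfl⟩
    exact ⟨_, ⟨_, rfl⟩, _, ⟨_, rfl⟩, (add_sum_smul_sumElim c1 c2 g1 g2 β).symm⟩

theorem logicalZonotope_add_singleton (c d : Fin n → ZMod 2) (g : ι → Fin n → ZMod 2) :
    LogicalZonotope c g + {d} = LogicalZonotope (c + d) g := by
  ext x
  simp only [Set.add_singleton, Set.mem_image, LogicalZonotope, Set.mem_ofPred_eq]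
  constructor
  · rintro ⟨_, ⟨β, rfl⟩, rfl⟩
    exact ⟨β, add_right_comm c _ d⟩
  · rintro ⟨β, rfl⟩
    exact ⟨_, ⟨β, rfl⟩, add_right_comm c _ d⟩

end

/-- Minkowski XNOR of two logical zonotopes equals the logical zonotope with center
`c1 + c2 + 1` (the all-ones vector added) and concatenated generators. -/
theorem minkowski_xnor_eq {n γ1 γ2 : ℕ} (c1 c2 : Fin n → ZMod 2)
    (g1 : Fin γ1 → Fin n → ZMod 2) (g2 : Fin γ2 → Fin n → ZMod 2) :
    {x | ∃ z1 ∈ LogicalZonotope c1 g1, ∃ z2 ∈ LogicalZonotope c2 g2, x = z1 + z2 + 1}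
      = LogicalZonotope (c1 + c2 + 1) (Sum.elim g1 g2) := by
  have xnor_eq_add_add_one :
      {x | ∃ z1 ∈ LogicalZonotope c1 g1, ∃ z2 ∈ LogicalZonotope c2 g2, x = z1 + z2 + 1}
        = LogicalZonotope c1 g1 + LogicalZonotope c2 g2 + {1} := by
    ext x
    simp only [Set.add_singleton, Set.mem_image, Set.mem_add, Set.mem_ofPred_eq]
    aesop
  rw [xnor_eq_add_add_one, logicalZonotope_add_logicalZonotope,
    logicalZonotope_add_singleton]
end

section
/- Given two logical zonotopes L1 = ⟨c1, G1⟩ (with γ1 generators) and L2 = ⟨c2, G2⟩ (with γ2 generators) in (ZMod 2)^n, the Minkowski AND L1 ∧ L2 = { z1 * z2 | z1 ∈ L1, z2 ∈ L2 } (componentwise multiplication) is contained in the logical zonotope with center c1 * c2 and generators given by the list: c1 * g_{2,j} for all j, c2 * g_{1,i} for all i, and g_{1,i} * g_{2,j} for all pairs (i,j), where * denotes componentwise product. -/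
section Expansion

variable {R A ι κ : Type*} [CommSemiring R] [CommSemiring A] [Algebra R A]
  [Fintype ι] [Fintype κ]

theorem add_sum_smul_mul_add_sum_smul (c₁ c₂ : A) (β₁ : ι → R) (β₂ : κ → R)
    (g₁ : ι → A) (g₂ : κ → A) :
    (c₁ + ∑ i, β₁ i • g₁ i) * (c₂ + ∑ j, β₂ j • g₂ j) =
      c₁ * c₂ + (∑ j, β₂ j • (c₁ * g₂ j) + (∑ i, β₁ i • (c₂ * g₁ i) +
        ∑ p : ι × κ, (β₁ p.1 * β₂ p.2) • (g₁ p.1 * g₂ p.2))) := by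
  have cross : (∑ i, β₁ i • g₁ i) * (∑ j, β₂ j • g₂ j) =
      ∑ p : ι × κ, (β₁ p.1 * β₂ p.2) • (g₁ p.1 * g₂ p.2) := by
    simp only [Finset.sum_mul_sum, smul_mul_smul_comm, Fintype.sum_prod_type]
  rw [add_mul, mul_add, mul_add, cross, Finset.mul_sum, Finset.sum_mul]
  simp only [mul_smul_comm, mul_comm _ c₂]
  abel

end Expansion

theorem mul_mem_logicalZonotope {n : ℕ} {ι κ : Type} [Fintype ι] [Fintype κ]
    {c₁ c₂ z₁ z₂ : Fin n → ZMod 2} {g₁ : ι → Fin n → ZMod 2} {g₂ : κ → Fin n → ZMod 2}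
    (h₁ : z₁ ∈ LogicalZonotope c₁ g₁) (h₂ : z₂ ∈ LogicalZonotope c₂ g₂) :
    z₁ * z₂ ∈ LogicalZonotope (c₁ * c₂)
      (Sum.elim (fun j => c₁ * g₂ j)
        (Sum.elim (fun i => c₂ * g₁ i) (fun p : ι × κ => g₁ p.1 * g₂ p.2))) := by
  obtain ⟨β₁, rfl⟩ := h₁
  obtain ⟨β₂, rfl⟩ := h₂
  refine ⟨Sum.elim β₂ (Sum.elim β₁ fun p => β₁ p.1 * β₂ p.2), ?_⟩
  simp only [Fintype.sum_sum_type, Sum.elim_inl, Sum.elim_inr]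
  exact add_sum_smul_mul_add_sum_smul c₁ c₂ β₁ β₂ g₁ g₂

/-- Minkowski AND over-approximation: the componentwise product set of two logical
zonotopes is contained in the zonotope with center `c1 * c2` and generators
`c1 * g2 j`, `c2 * g1 i`, and `g1 i * g2 j`. -/
theorem minkowski_and_subset {n γ1 γ2 : ℕ} (c1 c2 : Fin n → ZMod 2)
    (g1 : Fin γ1 → Fin n → ZMod 2) (g2 : Fin γ2 → Fin n → ZMod 2) :
    {x | ∃ z1 ∈ LogicalZonotope c1 g1, ∃ z2 ∈ LogicalZonotope c2 g2, x = z1 * z2}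
      ⊆ LogicalZonotope (c1 * c2)
          (Sum.elim (fun j => c1 * g2 j)
            (Sum.elim (fun i => c2 * g1 i)
              (fun p : Fin γ1 × Fin γ2 => g1 p.1 * g2 p.2))) := by
  rintro x ⟨z1, h1, z2, h2, rfl⟩
  exact mul_mem_logicalZonotope h1 h2
end

section
/- Define a polynomial logical zonotope P = ⟨c, G, E⟩ over (ZMod 2)^n as the set { c + ⊕_{i=1}^{h} (∏_{k=1}^{p} α_k^{E(k,i)}) • g_i | α ∈ (ZMod 2)^p }, where E ∈ (ZMod 2)^{p×h} is the exponent matrix and α_k^0 = 1, α_k^1 = α_k. Then for two polynomial logical zonotopes P1 = ⟨c1, G1, E1⟩ (with p1 factors, h1 generators) and P2 = ⟨c2, G2, E2⟩ (with p2 factors, h2 generators), the Minkowski XOR { z1 + z2 | z1 ∈ P1, z2 ∈ P2 } equals the polynomial logical zonotope with center c1 + c2, generator list the concatenation [G1, G2], and exponent matrix the block-diagonal matrix [[E1, 0],[0, E2]] over p1 + p2 factors. -/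
/-- A polynomial logical zonotope with center `c`, dependent generators `g` (indexed
by `ι`), and exponent matrix `E` over dependent factors indexed by `κ`. -/
def PolyLogicalZonotope {n : ℕ} {κ ι : Type} [Fintype κ] [Fintype ι]
    (c : Fin n → ZMod 2) (g : ι → Fin n → ZMod 2) (E : κ → ι → ZMod 2) :
    Set (Fin n → ZMod 2) :=
  {x | ∃ α : κ → ZMod 2, x = c + ∑ i, (∏ k, α k ^ (E k i).val) • g i}

/-!
With the exponent matrix `fromBlocks E₁ 0 0 E₂`, the factors of the first block do not occur
in the monomials of the second block's generators and vice versa. So a parameter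
`α : κ₁ ⊕ κ₂ → ZMod 2` is exactly a pair of independent parameters `(α ∘ inl, α ∘ inr)`, and the
generator sum splits into the two zonotopes' generator sums.
-/

open Matrix
open scoped Pointwise

section Monomial

variable {R : Type*} [CommSemiring R] {κ₁ κ₂ ι₁ ι₂ : Type*} [Fintype κ₁] [Fintype κ₂]
  (α : κ₁ ⊕ κ₂ → R) (E₁ : Matrix κ₁ ι₁ (ZMod 2)) (E₂ : Matrix κ₂ ι₂ (ZMod 2))

lemma prod_pow_fromBlocks_inl (i : ι₁) :
    ∏ k, α k ^ (fromBlocks E₁ 0 0 E₂ k (Sum.inl i)).val = ∏ k, α (Sum.inl k) ^ (E₁ k i).val := by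
  simp [Fintype.prod_sum_type]

lemma prod_pow_fromBlocks_inr (i : ι₂) :
    ∏ k, α k ^ (fromBlocks E₁ 0 0 E₂ k (Sum.inr i)).val = ∏ k, α (Sum.inr k) ^ (E₂ k i).val := by
  simp [Fintype.prod_sum_type]

lemma sum_prod_pow_fromBlocks_smul {M : Type*} [AddCommMonoid M] [Module R M]
    [Fintype ι₁] [Fintype ι₂] (g₁ : ι₁ → M) (g₂ : ι₂ → M) :
    ∑ i, (∏ k, α k ^ (fromBlocks E₁ 0 0 E₂ k i).val) • Sum.elim g₁ g₂ i =
      ∑ i, (∏ k, α (Sum.inl k) ^ (E₁ k i).val) • g₁ i +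
        ∑ i, (∏ k, α (Sum.inr k) ^ (E₂ k i).val) • g₂ i := by
  simp only [Fintype.sum_sum_type, Sum.elim_inl, Sum.elim_inr, prod_pow_fromBlocks_inl,
    prod_pow_fromBlocks_inr]

end Monomial

theorem PolyLogicalZonotope.add_eq_fromBlocks {n : ℕ} {κ₁ κ₂ ι₁ ι₂ : Type}
    [Fintype κ₁] [Fintype κ₂] [Fintype ι₁] [Fintype ι₂]
    (c₁ c₂ : Fin n → ZMod 2) (g₁ : ι₁ → Fin n → ZMod 2) (g₂ : ι₂ → Fin n → ZMod 2)
    (E₁ : Matrix κ₁ ι₁ (ZMod 2)) (E₂ : Matrix κ₂ ι₂ (ZMod 2)) :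
    PolyLogicalZonotope c₁ g₁ E₁ + PolyLogicalZonotope c₂ g₂ E₂ =
      PolyLogicalZonotope (c₁ + c₂) (Sum.elim g₁ g₂) (fromBlocks E₁ 0 0 E₂) := by
  ext x
  simp only [Set.mem_add, PolyLogicalZonotope, Set.mem_ofPred_eq]
  constructor
  · rintro ⟨_, ⟨α₁, rfl⟩, _, ⟨α₂, rfl⟩, rfl⟩
    refine ⟨Sum.elim α₁ α₂, ?_⟩
    simp only [sum_prod_pow_fromBlocks_smul, Sum.elim_inl, Sum.elim_inr]
    abel
  · rintro ⟨α, rfl⟩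
    refine ⟨_, ⟨α ∘ Sum.inl, rfl⟩, _, ⟨α ∘ Sum.inr, rfl⟩, ?_⟩
    simp only [sum_prod_pow_fromBlocks_smul, Function.comp_apply]
    abel

/-- Minkowski XOR of two polynomial logical zonotopes equals the polynomial logical
zonotope with center `c1 + c2`, concatenated generators and block-diagonal exponent
matrix. -/
theorem poly_minkowski_xor_eq {n p1 p2 h1 h2 : ℕ}
    (c1 c2 : Fin n → ZMod 2)
    (g1 : Fin h1 → Fin n → ZMod 2) (g2 : Fin h2 → Fin n → ZMod 2)
    (E1 : Fin p1 → Fin h1 → ZMod 2) (E2 : Fin p2 → Fin h2 → ZMod 2) :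
    {z | ∃ z1 ∈ PolyLogicalZonotope c1 g1 E1, ∃ z2 ∈ PolyLogicalZonotope c2 g2 E2,
        z = z1 + z2}
      = PolyLogicalZonotope (c1 + c2) (Sum.elim g1 g2)
          (fun k i => match k, i with
            | Sum.inl k, Sum.inl i => E1 k i
            | Sum.inr k, Sum.inr i => E2 k i
            | _, _ => 0) := by
  convert PolyLogicalZonotope.add_eq_fromBlocks c1 c2 g1 g2 E1 E2 using 1
  · ext z
    simp only [Set.mem_ofPred_eq, Set.mem_add, eq_comm]
  · congr 1
    funext k i
    rcases k with k | k <;> rcases i with i | i <;> rfl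
end

section
/- For two polynomial logical zonotopes P1 = ⟨c1, G1, E1⟩ (with independent factors α ∈ (ZMod 2)^{p1}) and P2 = ⟨c2, G2, E2⟩ (with independent factors α' ∈ (ZMod 2)^{p2}), the Minkowski AND { z1 * z2 | z1 ∈ P1, z2 ∈ P2 } (componentwise product) is exactly equal to the polynomial logical zonotope over p1 + p2 factors with center c1 * c2, generators [c1*g_{2,1},...,c1*g_{2,h2}, c2*g_{1,1},...,c2*g_{1,h1}, g_{1,1}*g_{2,1}, ..., g_{1,h1}*g_{2,h2}], and exponent matrix whose columns are: [0; E2(·,j)] for each j, [E1(·,i); 0] for each i, and [E1(·,i); E2(·,j)] for each pair (i,j). -/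
/-! Split the factor vector of the combined zonotope as `α = Sum.elim α₁ α₂`. The monomial of
the column `[E₁(·,i); E₂(·,j)]` is then the product of the monomials of `E₁(·,i)` and `E₂(·,j)`,
and a zero block contributes the monomial `1`, so the combined parametrization is the
distributive expansion of the product of the two parametrizations. -/

open Finset

theorem add_sum_smul_mul_add_sum_smul_s8 {R A ι κ : Type*} [CommSemiring R] [CommSemiring A]
    [Algebra R A] [Fintype ι] [Fintype κ] (c d : A) (a : ι → R) (x : ι → A) (b : κ → R)
    (y : κ → A) :
    (c + ∑ i, a i • x i) * (d + ∑ j, b j • y j) =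
      c * d + (∑ j, b j • (c * y j) + (∑ i, a i • (d * x i) +
        ∑ q : ι × κ, (a q.1 * b q.2) • (x q.1 * y q.2))) := by
  have hc : c * ∑ j, b j • y j = ∑ j, b j • (c * y j) := by simp only [mul_sum, mul_smul_comm]
  have hd : (∑ i, a i • x i) * d = ∑ i, a i • (d * x i) := by
    simp only [sum_mul, smul_mul_assoc, mul_comm (x _) d]
  have hxy : (∑ i, a i • x i) * ∑ j, b j • y j =
      ∑ q : ι × κ, (a q.1 * b q.2) • (x q.1 * y q.2) := by
    simp only [sum_mul_sum, ← sum_product', smul_mul_smul_comm, univ_product_univ]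
  rw [add_mul, mul_add, mul_add, hc, hd, hxy]
  abel

theorem Sum.exists_elim {α β γ : Type*} {P : (α ⊕ β → γ) → Prop} :
    (∃ f, P f) ↔ ∃ a b, P (Sum.elim a b) :=
  ⟨fun ⟨f, h⟩ => ⟨f ∘ Sum.inl, f ∘ Sum.inr, by rwa [Sum.elim_comp_inl_inr]⟩,
    fun ⟨a, b, h⟩ => ⟨_, h⟩⟩

/-- Minkowski AND of two polynomial logical zonotopes (independent factors) is exactly
the polynomial logical zonotope with center `c1 * c2`, generators
`c1 * g2 j`, `c2 * g1 i`, `g1 i * g2 j`, and exponent columns `[0; E2(·,j)]`,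
`[E1(·,i); 0]`, `[E1(·,i); E2(·,j)]` over `p1 + p2` factors. -/
theorem poly_minkowski_and_eq {n p1 p2 h1 h2 : ℕ}
    (c1 c2 : Fin n → ZMod 2)
    (g1 : Fin h1 → Fin n → ZMod 2) (g2 : Fin h2 → Fin n → ZMod 2)
    (E1 : Fin p1 → Fin h1 → ZMod 2) (E2 : Fin p2 → Fin h2 → ZMod 2) :
    {z | ∃ z1 ∈ PolyLogicalZonotope c1 g1 E1, ∃ z2 ∈ PolyLogicalZonotope c2 g2 E2,
        z = z1 * z2}
      = PolyLogicalZonotope (c1 * c2)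
          (Sum.elim (fun j => c1 * g2 j)
            (Sum.elim (fun i => c2 * g1 i)
              (fun q : Fin h1 × Fin h2 => g1 q.1 * g2 q.2)))
          (fun k : Fin p1 ⊕ Fin p2 =>
            Sum.elim
              (fun j : Fin h2 => Sum.elim (fun _ => (0 : ZMod 2)) (fun k2 => E2 k2 j) k)
              (Sum.elim
                (fun i : Fin h1 => Sum.elim (fun k1 => E1 k1 i) (fun _ => (0 : ZMod 2)) k)
                (fun q : Fin h1 × Fin h2 =>
                  Sum.elim (fun k1 => E1 k1 q.1) (fun k2 => E2 k2 q.2) k))) := by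
  ext z
  simp only [PolyLogicalZonotope, Set.mem_ofPred_eq, Sum.exists_elim, Fintype.sum_sum_type,
    Fintype.prod_sum_type, Sum.elim_inl, Sum.elim_inr, ZMod.val_zero, pow_zero, prod_const_one,
    one_mul, mul_one, ← add_sum_smul_mul_add_sum_smul_s8, exists_exists_eq_and,
    @eq_comm _ _ (c1 + _), @eq_comm _ _ (c2 + _)]
end

section
/- Exact XOR of polynomial logical zonotopes sharing factors: for P1 = ⟨c1, G1, E1⟩ and P2 = ⟨c2, G2, E2⟩ both with exponent matrices over the same p common dependent factors α ∈ (ZMod 2)^p, the dependent XOR set { (c1 + Σ_i m_i(α) g_{1,i}) + (c2 + Σ_j m'_j(α) g_{2,j}) | α ∈ (ZMod 2)^p } (with the same α used in both) equals the polynomial logical zonotope ⟨c1 + c2, [G1, G2], [E1, E2]⟩ obtained by concatenating the generators and concatenating the exponent matrices horizontally. -/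
lemma sum_sumElim_monomial_smul {n : ℕ} {κ ι₁ ι₂ : Type} [Fintype κ] [Fintype ι₁] [Fintype ι₂]
    (α : κ → ZMod 2) (g1 : ι₁ → Fin n → ZMod 2) (g2 : ι₂ → Fin n → ZMod 2)
    (E1 : κ → ι₁ → ZMod 2) (E2 : κ → ι₂ → ZMod 2) :
    ∑ i, (∏ k, α k ^ (Sum.elim (E1 k) (E2 k) i).val) • Sum.elim g1 g2 i
      = ∑ i, (∏ k, α k ^ (E1 k i).val) • g1 i + ∑ j, (∏ k, α k ^ (E2 k j).val) • g2 j :=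
  Fintype.sum_sum_type _

/-- Exact XOR of two polynomial logical zonotopes sharing the same `p` dependent
factors: the XOR with a shared factor vector `α` equals the polynomial logical
zonotope with center `c1 + c2`, concatenated generators and horizontally
concatenated exponent matrices. -/
theorem poly_exact_xor_eq {n p h1 h2 : ℕ}
    (c1 c2 : Fin n → ZMod 2)
    (g1 : Fin h1 → Fin n → ZMod 2) (g2 : Fin h2 → Fin n → ZMod 2)
    (E1 : Fin p → Fin h1 → ZMod 2) (E2 : Fin p → Fin h2 → ZMod 2) :
    {z | ∃ α : Fin p → ZMod 2,
        z = (c1 + ∑ i, (∏ k, α k ^ (E1 k i).val) • g1 i)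
          + (c2 + ∑ j, (∏ k, α k ^ (E2 k j).val) • g2 j)}
      = PolyLogicalZonotope (c1 + c2) (Sum.elim g1 g2)
          (fun k => Sum.elim (E1 k) (E2 k)) := by
  ext z
  refine exists_congr fun α => ?_
  rw [sum_sumElim_monomial_smul, add_add_add_comm]
end

section
/- Exact AND of polynomial logical zonotopes sharing factors: with P1 = ⟨c1, G1, E1⟩ and P2 = ⟨c2, G2, E2⟩ over the same p dependent factors, the dependent AND set { z1(α) * z2(α) | α ∈ (ZMod 2)^p } (componentwise product, same α in both) equals the polynomial logical zonotope with center c1*c2, generators [c1*g_{2,j} for all j, c2*g_{1,i} for all i, g_{1,i}*g_{2,j} for all (i,j)], and exponent matrix with columns [E2(·,j) for all j, E1(·,i) for all i, max(E1(·,i), E2(·,j)) componentwise for all (i,j)]. -/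
/-- Pointwise maximum of two binary entries of `ZMod 2` (their supremum as bits). -/
def zmax (a b : ZMod 2) : ZMod 2 := if a.val ≤ b.val then b else a

/-! Expanding the product bilinearly, the cross term of `g₁ i` and `g₂ j` carries the product
of two monomials in `α`. Since `a * a = a` in `ZMod 2`, that product is the monomial whose
exponent column is the componentwise maximum of the two, so both sets are the image of one and
the same map on `α`. -/

lemma pow_val_mul_pow_val_eq_pow_zmax (a e₁ e₂ : ZMod 2) :
    a ^ e₁.val * a ^ e₂.val = a ^ (zmax e₁ e₂).val := by
  revert a e₁ e₂; decide

lemma prod_pow_val_mul_prod_pow_val_eq_prod_pow_zmax {κ : Type*} [Fintype κ]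
    (α e₁ e₂ : κ → ZMod 2) :
    (∏ k, α k ^ (e₁ k).val) * ∏ k, α k ^ (e₂ k).val
      = ∏ k, α k ^ (zmax (e₁ k) (e₂ k)).val := by
  rw [← Finset.prod_mul_distrib]
  exact Finset.prod_congr rfl fun k _ => pow_val_mul_pow_val_eq_pow_zmax (α k) (e₁ k) (e₂ k)

lemma add_sum_smul_mul_add_sum_smul_s10 {R A ι₁ ι₂ : Type*} [Semiring R]
    [NonUnitalCommSemiring A] [Module R A] [IsScalarTower R A A] [SMulCommClass R A A]
    [Fintype ι₁] [Fintype ι₂] (c₁ c₂ : A) (a : ι₁ → R) (b : ι₂ → R)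
    (g₁ : ι₁ → A) (g₂ : ι₂ → A) :
    (c₁ + ∑ i, a i • g₁ i) * (c₂ + ∑ j, b j • g₂ j)
      = c₁ * c₂ + (∑ j, b j • (c₁ * g₂ j) + (∑ i, a i • (c₂ * g₁ i)
          + ∑ q : ι₁ × ι₂, (a q.1 * b q.2) • (g₁ q.1 * g₂ q.2))) := by
  rw [add_mul, mul_add, mul_add, Finset.mul_sum, Finset.sum_mul, Finset.sum_mul_sum,
    ← Finset.sum_product', Finset.univ_product_univ]
  simp only [smul_mul_smul_comm]
  simp only [mul_smul_comm, smul_mul_assoc, mul_comm (g₁ _) c₂]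
  abel

/-- Exact AND of two polynomial logical zonotopes sharing the same `p` dependent
factors: the componentwise product with a shared factor vector `α` equals the
polynomial logical zonotope with center `c1 * c2`, generators `c1 * g2 j`,
`c2 * g1 i`, `g1 i * g2 j`, and exponent columns `E2(·,j)`, `E1(·,i)`, and the
componentwise maximum `max(E1(·,i), E2(·,j))`. -/
theorem poly_exact_and_eq {n p h1 h2 : ℕ}
    (c1 c2 : Fin n → ZMod 2)
    (g1 : Fin h1 → Fin n → ZMod 2) (g2 : Fin h2 → Fin n → ZMod 2)
    (E1 : Fin p → Fin h1 → ZMod 2) (E2 : Fin p → Fin h2 → ZMod 2) :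
    {z | ∃ α : Fin p → ZMod 2,
        z = (c1 + ∑ i, (∏ k, α k ^ (E1 k i).val) • g1 i)
          * (c2 + ∑ j, (∏ k, α k ^ (E2 k j).val) • g2 j)}
      = PolyLogicalZonotope (c1 * c2)
          (Sum.elim (fun j => c1 * g2 j)
            (Sum.elim (fun i => c2 * g1 i)
              (fun q : Fin h1 × Fin h2 => g1 q.1 * g2 q.2)))
          (fun k =>
            Sum.elim (fun j : Fin h2 => E2 k j)
              (Sum.elim (fun i : Fin h1 => E1 k i)
                (fun q : Fin h1 × Fin h2 => zmax (E1 k q.1) (E2 k q.2)))) := by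
  ext z
  refine exists_congr fun α => ?_
  simp only [add_sum_smul_mul_add_sum_smul_s10, Fintype.sum_sum_type, Sum.elim_inl, Sum.elim_inr,
    prod_pow_val_mul_prod_pow_val_eq_prod_pow_zmax]
end
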